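/- Let c : ℕ → ℕ count successful critical SCs of a fixed handle up to time t (monotone, increasing by exactly 1 at each such SC). Suppose each high-level operation of that handle contains at most one successful critical SC. If detect is run at times t₁ < t₂ with exactly one operation α of the handle executing in (t₁, t₂), then c t₂ - c t₁ ∈ {0, 1}, with c t₂ - c t₁ = 1 iff α performed a successful critical SC, and in that case the stored operation descriptor at t₂ identifies α's type (write or CAS) and determines the recovered response (ack for write, true for CAS). -/
import Mathlib


/-- The type of a high-level operation, as persistently stored in the handle's
descriptor. -/
inductive OpType : Type
  | write : OpType
  | cas : OpType
deriving DecidableEq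

/-- The recovered response determined by the stored operation type. -/
inductive Resp : Type
  | ack : Resp
  | rtrue : Resp
deriving DecidableEq

/-- `detect`'s response: ack for a write, true for a CAS. -/
def recResp : OpType → Resp
  | .write => .ack
  | .cas => .rtrue

lemma count_aux (c : ℕ → ℕ) (CSC : ℕ → Prop) [DecidablePred CSC]
    (hstep : ∀ t, c (t + 1) = c t + (if CSC (t + 1) then 1 else 0))
    (t₁ : ℕ) : ∀ t, t₁ ≤ t →
      c t = c t₁ + ((Finset.Ioc t₁ t).filter CSC).card := by
  intro t
  induction t with
  | zero => intro h; simp [Nat.le_zero.mp h]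
  | succ n ih =>
    intro h
    rcases Nat.lt_or_ge t₁ (n+1) with hlt | hge
    · have hn : t₁ ≤ n := Nat.lt_succ_iff.mp hlt
      have hioc : Finset.Ioc t₁ (n+1) = insert (n+1) (Finset.Ioc t₁ n) := by
        ext x
        simp only [Finset.mem_Ioc, Finset.mem_insert]
        omega
      rw [hstep n, ih hn, hioc, Finset.filter_insert]
      by_cases hc : CSC (n+1)
      · rw [if_pos hc, if_pos hc, Finset.card_insert_of_notMem (by simp)]
        omega
      · rw [if_neg hc, if_neg hc]; omega
    · have : t₁ = n + 1 := by omega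
      subst this; simp

/-- If the per-handle counter `c` increases by exactly 1 at each successful
critical SC of the handle (and is otherwise unchanged), exactly one operation
`α` of the handle (with interval `(a, b]`) runs between two detect calls at
`t₁ < t₂`, all the handle's successful critical SCs in `(t₁, t₂]` lie in
`α`'s interval, and `α` performs at most one successful critical SC, then
`c t₂ - c t₁ ∈ {0, 1}`, with `c t₂ - c t₁ = 1` iff `α` performed a successful
critical SC; and in that case the stored descriptor identifies `α`'s type and
determines the recovered response (ack for write, true for CAS). -/
theorem stmt18 (c : ℕ → ℕ) (CSC : ℕ → Prop) [DecidablePred CSC]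
    (hstep : ∀ t, c (t + 1) = c t + (if CSC (t + 1) then 1 else 0))
    (t₁ a b t₂ : ℕ) (h1 : t₁ < a) (hab : a ≤ b) (h2 : b < t₂)
    (honly : ∀ u, t₁ < u → u ≤ t₂ → CSC u → a < u ∧ u ≤ b)
    (hone : ∀ u v, a < u → u ≤ b → CSC u → a < v → v ≤ b → CSC v → u = v)
    (stored αtype : OpType) (hstore : stored = αtype) :
    c t₂ - c t₁ ≤ 1 ∧
    ((c t₂ - c t₁ = 1) ↔ ∃ u, a < u ∧ u ≤ b ∧ CSC u) ∧
    (c t₂ - c t₁ = 1 →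
      (recResp stored = Resp.ack ↔ αtype = OpType.write) ∧
      (recResp stored = Resp.rtrue ↔ αtype = OpType.cas)) := by
  have ht : t₁ ≤ t₂ := by omega
  have hc := count_aux c CSC hstep t₁ t₂ ht
  set S := (Finset.Ioc t₁ t₂).filter CSC with hS
  have hdiff : c t₂ - c t₁ = S.card := by omega
  have hcard : S.card ≤ 1 := by
    apply Finset.card_le_one.mpr
    intro u hu v hv
    simp only [hS, Finset.mem_filter, Finset.mem_Ioc] at hu hv
    obtain ⟨hu1, hu2⟩ := honly u hu.1.1 hu.1.2 hu.2
    obtain ⟨hv1, hv2⟩ := honly v hv.1.1 hv.1.2 hv.2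
    exact hone u v hu1 hu2 hu.2 hv1 hv2 hv.2
  refine ⟨by omega, ?_, ?_⟩
  · constructor
    · intro h
      have : S.Nonempty := Finset.card_pos.mp (by omega)
      obtain ⟨u, hu⟩ := this
      simp only [hS, Finset.mem_filter, Finset.mem_Ioc] at hu
      obtain ⟨hu1, hu2⟩ := honly u hu.1.1 hu.1.2 hu.2
      exact ⟨u, hu1, hu2, hu.2⟩
    · rintro ⟨u, hu1, hu2, hu3⟩
      have huS : u ∈ S := by
        simp only [hS, Finset.mem_filter, Finset.mem_Ioc]
        exact ⟨⟨by omega, by omega⟩, hu3⟩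
      have : 1 ≤ S.card := Finset.card_pos.mpr ⟨u, huS⟩
      omega
  · intro _
    subst hstore
    cases stored <;> simp [recResp]
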